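/- For every closed λ-term M and natural number n, if the tree term graph 𝔾(⟨M⟩) rewrites in n steps of the graph rewrite system corresponding to Φ to a term graph G, then the number of vertices of G is at most (n+1)·|M|, where |M| is the size of M. -/

import Mathlib

/-- Untyped λ-terms over variables drawn from ℕ (a denumerable totally ordered set). -/
inductive Lam : Type
  | var : ℕ → Lam
  | lam : ℕ → Lam → Lam
  | app : Lam → Lam → Lam
deriving DecidableEq, Repr

namespace Lam

/-- Capture-permitting substitution M{N/x} (adequate for weak reduction of closed terms). -/
def subst : Lam → ℕ → Lam → Lam
  | var y, x, N => if y = x then N else var y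
  | lam y M, x, N => if y = x then lam y M else lam y (subst M x N)
  | app M₁ M₂, x, N => app (subst M₁ x N) (subst M₂ x N)

/-- Simultaneous substitution along a partial assignment of terms to variables. -/
def msubst : Lam → (ℕ → Option Lam) → Lam
  | var y, σ => (σ y).getD (var y)
  | lam y M, σ => lam y (msubst M (fun z => if z = y then none else σ z))
  | app M₁ M₂, σ => app (msubst M₁ σ) (msubst M₂ σ)

/-- The assignment sending each `xᵢ` to `tᵢ` (first match wins). -/
def substOf (xs : List ℕ) (ts : List Lam) : ℕ → Option Lam :=
  fun y => (xs.zip ts).lookup y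

/-- Values: variables and abstractions. -/
def IsValue : Lam → Prop
  | var _ => True
  | lam _ _ => True
  | app _ _ => False

/-- Weak call-by-value reduction. -/
inductive CbvStep : Lam → Lam → Prop
  | beta {x : ℕ} {M V : Lam} : IsValue V → CbvStep (app (lam x M) V) (subst M x V)
  | appL {M N L : Lam} : CbvStep M N → CbvStep (app M L) (app N L)
  | appR {M N L : Lam} : CbvStep M N → CbvStep (app L M) (app L N)

/-- A →v-normal form. -/
def CbvNormal (M : Lam) : Prop := ¬ ∃ N, CbvStep M N

/-- Free variables, as a finite set. -/
def fv : Lam → Finset ℕ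
  | var x => {x}
  | lam x M => fv M \ {x}
  | app M N => fv M ∪ fv N

/-- The sequence (without repetitions, in variable order) of free variables of `M`. -/
def fvList (M : Lam) : List ℕ := (fv M).sort (· ≤ ·)

def Closed (M : Lam) : Prop := fv M = ∅

/-- The size |M| of a λ-term. -/
def size : Lam → ℕ
  | var _ => 1
  | lam _ M => size M + 1
  | app M N => size M + size N + 1

end Lam

/-- `NSteps r n a b`: `a` reduces to `b` in exactly `n` `r`-steps. -/
def NSteps {α : Type*} (r : α → α → Prop) : ℕ → α → α → Prop
  | 0 => fun a b => a = b
  | n + 1 => fun a c => ∃ b, r a b ∧ NSteps r n b c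

/-- First-order terms over a signature with constructors `C` and function symbols `F`,
with variables drawn from ℕ. -/
inductive GTerm (C F : Type) : Type
  | var : ℕ → GTerm C F
  | con : C → List (GTerm C F) → GTerm C F
  | fn : F → List (GTerm C F) → GTerm C F

namespace GTerm

variable {C F : Type}

/-- Constructor terms: built only from constructors. -/
inductive IsConTerm : GTerm C F → Prop
  | con {c ts} : (∀ t ∈ ts, IsConTerm t) → IsConTerm (con c ts)

/-- Patterns: built from constructors and variables. -/
inductive IsPattern : GTerm C F → Prop
  | var {x} : IsPattern (var x)
  | con {c ts} : (∀ t ∈ ts, IsPattern t) → IsPattern (con c ts)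

/-- Arity discipline: every symbol is applied to as many arguments as its arity. -/
inductive WFT (arc : C → ℕ) (arf : F → ℕ) : GTerm C F → Prop
  | var {x} : WFT arc arf (var x)
  | con {c ts} : ts.length = arc c → (∀ t ∈ ts, WFT arc arf t) → WFT arc arf (con c ts)
  | fn {f ts} : ts.length = arf f → (∀ t ∈ ts, WFT arc arf t) → WFT arc arf (fn f ts)

/-- The list of variable occurrences of a term, in left-to-right order. -/
def varsL : GTerm C F → List ℕ
  | var x => [x]
  | con _ ts => ts.attach.flatMap (fun t => varsL t.1)
  | fn _ ts => ts.attach.flatMap (fun t => varsL t.1)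
decreasing_by
  all_goals simp_wf
  all_goals have := List.sizeOf_lt_of_mem t.2
  all_goals omega

/-- Substitution of terms for variables. -/
def gsubst (σ : ℕ → Option (GTerm C F)) : GTerm C F → GTerm C F
  | var y => (σ y).getD (var y)
  | con c ts => con c (ts.attach.map (fun t => gsubst σ t.1))
  | fn f ts => fn f (ts.attach.map (fun t => gsubst σ t.1))
decreasing_by
  all_goals simp_wf
  all_goals have := List.sizeOf_lt_of_mem t.2
  all_goals omega

end GTerm

/-- A constructor rewrite rule f(p₁,…,pₙ) → rhs. -/
structure GRule (C F : Type) where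
  f : F
  args : List (GTerm C F)
  rhs : GTerm C F

/-- Well-formedness of a rule: the lhs arguments are patterns respecting the
arities, the lhs is linear, and the rhs is a well-formed term all of whose
variables occur in the lhs. -/
def GRule.WF {C F : Type} (arc : C → ℕ) (arf : F → ℕ) (r : GRule C F) : Prop :=
  (∀ p ∈ r.args, GTerm.IsPattern p) ∧
  r.args.length = arf r.f ∧
  (∀ p ∈ r.args, GTerm.WFT arc arf p) ∧
  (r.args.flatMap GTerm.varsL).Nodup ∧
  GTerm.WFT arc arf r.rhs ∧
  (∀ x ∈ r.rhs.varsL, x ∈ r.args.flatMap GTerm.varsL)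

/-- Non-overlapping rules: the left-hand sides of distinct rules cannot be
instantiated (by constructor terms) to a common term. -/
def NonOverlapping {C F : Type} (Rs : Set (GRule C F)) : Prop :=
  ∀ r₁ ∈ Rs, ∀ r₂ ∈ Rs, r₁ ≠ r₂ → r₁.f = r₂.f →
    ¬ ∃ σ τ : ℕ → Option (GTerm C F),
        (∀ x t, σ x = some t → GTerm.IsConTerm t) ∧
        (∀ x t, τ x = some t → GTerm.IsConTerm t) ∧
        r₁.args.map (GTerm.gsubst σ) = r₂.args.map (GTerm.gsubst τ)

/-- An orthogonal constructor rewrite system. -/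
def Orthogonal {C F : Type} (arc : C → ℕ) (arf : F → ℕ) (Rs : Set (GRule C F)) : Prop :=
  (∀ r ∈ Rs, GRule.WF arc arf r) ∧ NonOverlapping Rs

/-- One-step (call-by-value) rewriting: a rule instantiated by constructor terms
fires, closed under arbitrary contexts. -/
inductive XStep {C F : Type} (Rs : Set (GRule C F)) : GTerm C F → GTerm C F → Prop
  | root {r : GRule C F} {σ : ℕ → Option (GTerm C F)} :
      r ∈ Rs → (∀ x t, σ x = some t → GTerm.IsConTerm t) →
      XStep Rs (GTerm.fn r.f (r.args.map (GTerm.gsubst σ))) (GTerm.gsubst σ r.rhs)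
  | conCtx {c ts₁ t t' ts₂} : XStep Rs t t' →
      XStep Rs (GTerm.con c (ts₁ ++ t :: ts₂)) (GTerm.con c (ts₁ ++ t' :: ts₂))
  | fnCtx {f ts₁ t t' ts₂} : XStep Rs t t' →
      XStep Rs (GTerm.fn f (ts₁ ++ t :: ts₂)) (GTerm.fn f (ts₁ ++ t' :: ts₂))

/-- Normal forms of the rewrite system. -/
def XNormal {C F : Type} (Rs : Set (GRule C F)) (t : GTerm C F) : Prop :=
  ¬ ∃ u, XStep Rs t u

/-- Closed terms: no variables. -/
def GClosed {C F : Type} (t : GTerm C F) : Prop := t.varsL = []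

open scoped Classical

/-- A term graph over a signature with constructors `C` and function symbols `F`:
a finite set of vertices (natural numbers), a partial labelling, an ordered list of
successors for every vertex (empty for unlabelled vertices), and a root. -/
structure TermGraph (C F : Type) where
  V : Finset ℕ
  lab : ℕ → Option (C ⊕ F)
  succ : ℕ → List ℕ
  root : ℕ

namespace TermGraph

variable {C F : Type}

/-- The arity of a symbol. -/
def arity (arc : C → ℕ) (arf : F → ℕ) : C ⊕ F → ℕ := Sum.elim arc arf

/-- The edge relation of a graph. -/
def edge (G : TermGraph C F) (a b : ℕ) : Prop := a ∈ G.V ∧ b ∈ G.succ a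

/-- Reachability in a graph. -/
def Reach (G : TermGraph C F) (a b : ℕ) : Prop := Relation.ReflTransGen G.edge a b

/-- Well-formed graphs: the root is a vertex, edges stay inside the vertex set,
the out-degree of every vertex matches the arity of its label (0 if unlabelled),
and the graph is acyclic. -/
structure WFG (arc : C → ℕ) (arf : F → ℕ) (G : TermGraph C F) : Prop where
  root_mem : G.root ∈ G.V
  succ_mem : ∀ v ∈ G.V, ∀ w ∈ G.succ v, w ∈ G.V
  arity_ok : ∀ v ∈ G.V, (G.succ v).length = ((G.lab v).map (arity arc arf)).getD 0
  acyclic : ∀ v, ¬ Relation.TransGen G.edge v v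

/-- A graph is closed if its labelling is total on vertices. -/
def ClosedG (G : TermGraph C F) : Prop := ∀ v ∈ G.V, (G.lab v).isSome

/-- Follow a path (a list of child indices) from a vertex. -/
def follow (G : TermGraph C F) : ℕ → List ℕ → Option ℕ
  | v, [] => some v
  | v, i :: is => ((G.succ v)[i]?).bind (fun w => follow G w is)

/-- A graph is constructor-shared if every vertex reachable from the root by two
distinct paths only reaches constructor-labelled vertices. -/
def ConstructorShared (G : TermGraph C F) : Prop :=
  ∀ v (p q : List ℕ), follow G G.root p = some v → follow G G.root q = some v →
    p ≠ q → ∀ w, G.Reach v w → ∃ c, G.lab w = some (Sum.inl c)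

/-- `Unfolds G v t`: the (closed) term `t` is the unfolding of the graph `G`
at vertex `v`. -/
inductive Unfolds (G : TermGraph C F) : ℕ → GTerm C F → Prop
  | con {v : ℕ} {c : C} {ts : List (GTerm C F)} :
      G.lab v = some (Sum.inl c) → (G.succ v).length = ts.length →
      (∀ (j : ℕ) (h : j < ts.length), Unfolds G ((G.succ v).getD j 0) ts[j]) →
      Unfolds G v (GTerm.con c ts)
  | fn {v : ℕ} {f : F} {ts : List (GTerm C F)} :
      G.lab v = some (Sum.inr f) → (G.succ v).length = ts.length →
      (∀ (j : ℕ) (h : j < ts.length), Unfolds G ((G.succ v).getD j 0) ts[j]) →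
      Unfolds G v (GTerm.fn f ts)

/-- A homomorphism from the subgraph of `H` rooted at `l` into `G`. -/
def IsHom (H : TermGraph C F) (l : ℕ) (G : TermGraph C F) (φ : ℕ → ℕ) : Prop :=
  ∀ v, H.Reach l v → φ v ∈ G.V ∧
    ∀ a, H.lab v = some a →
      G.lab (φ v) = some a ∧ G.succ (φ v) = (H.succ v).map φ

/-- A redex in `G` for a rule graph `(H, l, r)`: a homomorphism from the subgraph of
`H` rooted at `l` into `G` such that every path starting at the image of an
unlabelled (variable) node is a constructor path. -/
def IsRedex (H : TermGraph C F) (l : ℕ) (G : TermGraph C F) (φ : ℕ → ℕ) : Prop :=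
  IsHom H l G φ ∧
  ∀ v, H.Reach l v → H.lab v = none →
    ∀ w, G.Reach (φ v) w → ∃ c, G.lab w = some (Sum.inl c)

/-- Firing a redex `(H, l, r, φ)` in `G`: the build phase copies the part of the
right-hand side subgraph not contained in the left-hand side subgraph (fresh
vertices are obtained by adding the offset `off`), the redirection phase redirects
all edges pointing to `φ l` towards (the copy of) `r` and re-roots if necessary,
and the garbage-collection phase keeps only the vertices reachable from the new
root. -/
noncomputable def fire (G : TermGraph C F) (H : TermGraph C F) (l r : ℕ) (φ : ℕ → ℕ) :
    TermGraph C F :=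
  let off := G.V.sup id + 1
  let ψ : ℕ → ℕ := fun v => if H.Reach l v then φ v else v + off
  let tgt := ψ r
  let rd : ℕ → ℕ := fun w => if w = φ l then tgt else w
  let copies := (H.V.filter (fun v => H.Reach r v ∧ ¬ H.Reach l v)).image (· + off)
  let lab1 : ℕ → Option (C ⊕ F) :=
    fun v => if v ∈ copies then H.lab (v - off) else G.lab v
  let succ1 : ℕ → List ℕ :=
    fun v => if v ∈ copies then ((H.succ (v - off)).map ψ).map rd
             else (G.succ v).map rd
  let root1 := rd G.root
  let V1 := G.V ∪ copies
  { V := V1.filter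
      (fun v => Relation.ReflTransGen (fun a b => a ∈ V1 ∧ b ∈ succ1 a) root1 v),
    lab := lab1, succ := succ1, root := root1 }

end TermGraph

/-- State of the tree-graph builder. -/
structure GB (C F : Type) where
  next : ℕ
  lab : ℕ → Option (C ⊕ F)
  succ : ℕ → List ℕ

mutual
/-- Build the tree of a term on top of a builder state, the (already allocated)
node `vm x` standing for the variable `x`; returns the root of the new tree. -/
def buildT {C F : Type} (vm : ℕ → ℕ) : GTerm C F → GB C F → ℕ × GB C F
  | .var x, s => (vm x, s)
  | .con c ts, s =>
      let p := buildL vm ts s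
      (p.2.next,
        ⟨p.2.next + 1,
         fun v => if v = p.2.next then some (Sum.inl c) else p.2.lab v,
         fun v => if v = p.2.next then p.1 else p.2.succ v⟩)
  | .fn f ts, s =>
      let p := buildL vm ts s
      (p.2.next,
        ⟨p.2.next + 1,
         fun v => if v = p.2.next then some (Sum.inr f) else p.2.lab v,
         fun v => if v = p.2.next then p.1 else p.2.succ v⟩)

def buildL {C F : Type} (vm : ℕ → ℕ) : List (GTerm C F) → GB C F → List ℕ × GB C F
  | [], s => ([], s)
  | t :: ts, s =>
      let p := buildT vm t s
      let q := buildL vm ts p.2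
      (p.1 :: q.1, q.2)
end

/-- The term graph of a term: one unlabelled node for each variable (shared), and
a fresh node for every other symbol occurrence.  For a closed term this is the
tree term graph 𝔾(t). -/
def graphOfTerm {C F : Type} (t : GTerm C F) : TermGraph C F :=
  let vs := t.varsL.dedup
  let vm : ℕ → ℕ := fun x => vs.idxOf x
  let p := buildT vm t ⟨vs.length, fun _ => none, fun _ => []⟩
  { V := Finset.range p.2.next, lab := p.2.lab, succ := p.2.succ, root := p.1 }

/-- The graph rewrite rule corresponding to a term rewrite rule: the trees of the
left- and right-hand sides, sharing the nodes representing the same variable.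
Returns the rule graph together with its left and right roots. -/
def ruleGraph {C F : Type} (r : GRule C F) : TermGraph C F × ℕ × ℕ :=
  let lhs : GTerm C F := GTerm.fn r.f r.args
  let vs := lhs.varsL.dedup
  let vm : ℕ → ℕ := fun x => vs.idxOf x
  let p := buildT vm lhs ⟨vs.length, fun _ => none, fun _ => []⟩
  let q := buildT vm r.rhs p.2
  ({ V := Finset.range q.2.next, lab := q.2.lab, succ := q.2.succ, root := p.1 },
   p.1, q.1)

/-- One-step graph rewriting in the graph rewrite system corresponding to the
rules `Rs`. -/
inductive GStep {C F : Type} (Rs : Set (GRule C F)) : TermGraph C F → TermGraph C F → Prop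
  | mk {G : TermGraph C F} {r : GRule C F} {φ : ℕ → ℕ} :
      r ∈ Rs →
      TermGraph.IsRedex (ruleGraph r).1 (ruleGraph r).2.1 G φ →
      GStep Rs G (TermGraph.fire G (ruleGraph r).1 (ruleGraph r).2.1 (ruleGraph r).2.2 φ)

/-- Graph normal forms: no redex can be fired. -/
def GNormal {C F : Type} (Rs : Set (GRule C F)) (G : TermGraph C F) : Prop :=
  ¬ ∃ I, GStep Rs G I

/-- The signature of Φ: a constructor c_{x,M} for every variable x and λ-term M
(of arity the number of free variables of λx.M), and a single binary function
symbol app. -/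
abbrev PhiC : Type := ℕ × Lam
abbrev PhiF : Type := Unit

/-- Arities of the constructors of Φ. -/
def phiArc : PhiC → ℕ := fun p => (Lam.fvList (Lam.lam p.1 p.2)).length

/-- Arity of the function symbol app of Φ. -/
def phiArf : PhiF → ℕ := fun _ => 2

/-- The translation ⟨·⟩ from λ-terms to Φ-terms. -/
def transG : Lam → GTerm PhiC PhiF
  | .var x => .var x
  | .lam x M => .con (x, M) ((Lam.fvList (.lam x M)).map .var)
  | .app M N => .fn () [transG M, transG N]

/-- The rewrite rules of Φ: app(c_{x,M}(x₁,…,xₙ), x) → ⟨M⟩ where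
FV(λx.M) = x₁,…,xₙ. -/
def PhiGRules : Set (GRule PhiC PhiF) :=
  { r | ∃ (x : ℕ) (M : Lam),
      r = ⟨(), [GTerm.con (x, M) ((Lam.fvList (.lam x M)).map GTerm.var),
            GTerm.var x], transG M⟩ }

/-! Every constructor label `c_{y,Q}` of a reduct of `𝔾(⟨M⟩)` satisfies `|Q| < |M|`: this holds
for the labels of `⟨M⟩`, and firing the rule of `λx.N` only introduces labels of its rule graph,
namely `c_{x,N}`, which was matched in the graph, and the labels of `⟨N⟩`. A step adds only copies
of the right-hand-side nodes not reachable from the left root, i.e. the at most `|N| < |M|` nodes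
of the tree of `⟨N⟩`, and `𝔾(⟨M⟩)` itself has at most `|M|` nodes since `M` is closed. -/

theorem NSteps.invariant_and_le_add_mul {α : Type*} {r : α → α → Prop} {P : α → Prop}
    {f : α → ℕ} {B : ℕ} (hstep : ∀ a b, P a → r a b → P b ∧ f b ≤ f a + B) :
    ∀ {n : ℕ} {a b : α}, P a → NSteps r n a b → P b ∧ f b ≤ f a + n * B
  | 0, a, b, ha, (hab : a = b) => by subst hab; simpa using ha
  | n + 1, a, c, ha, ⟨b, hab, hbc⟩ => by
    obtain ⟨hb, hfb⟩ := hstep a b ha hab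
    obtain ⟨hc, hfc⟩ := invariant_and_le_add_mul hstep hb hbc
    exact ⟨hc, by rw [add_mul, one_mul]; omega⟩

namespace GTerm

variable {C F : Type}

inductive ForallSym (P : C ⊕ F → Prop) : GTerm C F → Prop
  | var {x} : ForallSym P (.var x)
  | con {c ts} : P (.inl c) → (∀ t ∈ ts, ForallSym P t) → ForallSym P (.con c ts)
  | fn {f ts} : P (.inr f) → (∀ t ∈ ts, ForallSym P t) → ForallSym P (.fn f ts)

theorem ForallSym.mono {P Q : C ⊕ F → Prop} (h : ∀ a, P a → Q a) {t : GTerm C F}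
    (ht : ForallSym P t) : ForallSym Q t := by
  induction ht with
  | var => exact .var
  | con hc _ ih => exact .con (h _ hc) ih
  | fn hf _ ih => exact .fn (h _ hf) ih

theorem varsL_con (c : C) (ts : List (GTerm C F)) :
    (con c ts).varsL = ts.flatMap varsL := by
  rw [varsL]; simp

theorem varsL_fn (f : F) (ts : List (GTerm C F)) :
    (fn f ts).varsL = ts.flatMap varsL := by
  rw [varsL]; simp

end GTerm

section Build

variable {C F : Type}

mutual
theorem next_le_buildT_next (vm : ℕ → ℕ) (t : GTerm C F) (s : GB C F) :
    s.next ≤ (buildT vm t s).2.next := by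
  cases t with
  | var x => simp [buildT]
  | con c ts => have := next_le_buildL_next vm ts s; simp only [buildT]; omega
  | fn f ts => have := next_le_buildL_next vm ts s; simp only [buildT]; omega

theorem next_le_buildL_next (vm : ℕ → ℕ) (ts : List (GTerm C F)) (s : GB C F) :
    s.next ≤ (buildL vm ts s).2.next := by
  cases ts with
  | nil => simp [buildL]
  | cons t ts =>
    have h₁ := next_le_buildT_next vm t s
    have h₂ := next_le_buildL_next vm ts (buildT vm t s).2
    simp only [buildL]; omega
end

mutual
theorem buildT_lab_succ_of_lt (vm : ℕ → ℕ) (t : GTerm C F) (s : GB C F) {v : ℕ}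
    (hv : v < s.next) :
    (buildT vm t s).2.lab v = s.lab v ∧ (buildT vm t s).2.succ v = s.succ v := by
  cases t with
  | var x => simp [buildT]
  | con c ts | fn c ts =>
    have hle := next_le_buildL_next vm ts s
    have hne : v ≠ (buildL vm ts s).2.next := by omega
    simpa [buildT, hne] using buildL_lab_succ_of_lt vm ts s hv

theorem buildL_lab_succ_of_lt (vm : ℕ → ℕ) (ts : List (GTerm C F)) (s : GB C F) {v : ℕ}
    (hv : v < s.next) :
    (buildL vm ts s).2.lab v = s.lab v ∧ (buildL vm ts s).2.succ v = s.succ v := by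
  cases ts with
  | nil => simp [buildL]
  | cons t ts =>
    have hle := next_le_buildT_next vm t s
    have ht := buildT_lab_succ_of_lt vm t s hv
    have hts := buildL_lab_succ_of_lt vm ts (buildT vm t s).2 (v := v) (by omega)
    exact ⟨hts.1.trans ht.1, hts.2.trans ht.2⟩
end

mutual
theorem buildT_lab_forall {P : C ⊕ F → Prop} (vm : ℕ → ℕ) {t : GTerm C F} {s : GB C F}
    (hs : ∀ v a, s.lab v = some a → P a) (ht : t.ForallSym P) :
    ∀ v a, (buildT vm t s).2.lab v = some a → P a := by
  cases ht with
  | var => simpa [buildT] using hs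
  | con hc hts | fn hc hts =>
    intro v a
    simp only [buildT]
    split_ifs
    · rintro ⟨rfl⟩; exact hc
    · exact buildL_lab_forall vm hs hts v a

theorem buildL_lab_forall {P : C ⊕ F → Prop} (vm : ℕ → ℕ) {ts : List (GTerm C F)}
    {s : GB C F} (hs : ∀ v a, s.lab v = some a → P a) (hts : ∀ t ∈ ts, t.ForallSym P) :
    ∀ v a, (buildL vm ts s).2.lab v = some a → P a := by
  cases ts with
  | nil => simpa [buildL] using hs
  | cons t ts =>
    exact buildL_lab_forall (s := (buildT vm t s).2) vm
      (buildT_lab_forall vm hs (hts t (by simp)))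
      (fun u hu => hts u (by simp [hu]))
end

theorem buildL_map_var (vm : ℕ → ℕ) (ys : List ℕ) (s : GB C F) :
    buildL vm (ys.map GTerm.var) s = (ys.map vm, s) := by
  induction ys generalizing s with
  | nil => simp [buildL]
  | cons y ys ih => simp [buildL, buildT, ih]

end Build

namespace TermGraph

variable {C F : Type}

def ForallLab (P : C ⊕ F → Prop) (G : TermGraph C F) : Prop :=
  ∀ v a, G.lab v = some a → P a

theorem ForallLab.fire {P : C ⊕ F → Prop} {G H : TermGraph C F} {l r : ℕ} {φ : ℕ → ℕ}
    (hG : G.ForallLab P) (hH : H.ForallLab P) : (fire G H l r φ).ForallLab P := by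
  intro v a
  simp only [TermGraph.fire]
  split_ifs
  exacts [hH _ a, hG v a]

theorem card_fire_V_le (G H : TermGraph C F) (l r : ℕ) (φ : ℕ → ℕ) :
    (fire G H l r φ).V.card ≤ G.V.card + (H.V.filter fun v => ¬ H.Reach l v).card := by
  set off := G.V.sup id + 1
  calc (fire G H l r φ).V.card
      ≤ (G.V ∪ (H.V.filter fun v => H.Reach r v ∧ ¬ H.Reach l v).image (· + off)).card :=
        Finset.card_le_card (Finset.filter_subset _ _)
    _ ≤ G.V.card + (H.V.filter fun v => H.Reach r v ∧ ¬ H.Reach l v).card :=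
        (Finset.card_union_le _ _).trans (Nat.add_le_add_left Finset.card_image_le _)
    _ ≤ G.V.card + (H.V.filter fun v => ¬ H.Reach l v).card :=
        Nat.add_le_add_left (Finset.card_le_card fun _ hv => by
          simp only [Finset.mem_filter] at hv ⊢; exact ⟨hv.1, hv.2.2⟩) _

end TermGraph

section Phi

open Lam GTerm

def BodySizeLt (B : ℕ) : PhiC ⊕ PhiF → Prop :=
  Sum.elim (fun p => p.2.size < B) fun _ => True

theorem bodySizeLt_mono {B B' : ℕ} (h : B ≤ B') : ∀ a, BodySizeLt B a → BodySizeLt B' a := by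
  rintro (p | f) ha
  exacts [lt_of_lt_of_le ha h, trivial]

theorem forallSym_transG (N : Lam) : (transG N).ForallSym (BodySizeLt N.size) := by
  induction N with
  | var x => exact .var
  | lam y M _ =>
    refine .con (by simp [BodySizeLt, size]) fun t ht => ?_
    obtain ⟨_, _, rfl⟩ := List.mem_map.mp ht
    exact .var
  | app M N ihM ihN =>
    refine .fn trivial fun t ht => ?_
    simp only [List.mem_cons, List.not_mem_nil, or_false] at ht
    rcases ht with rfl | rfl
    · exact ihM.mono (bodySizeLt_mono (by simp [size]; omega))
    · exact ihN.mono (bodySizeLt_mono (by simp [size]; omega))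

theorem buildT_transG_next_le (vm : ℕ → ℕ) (N : Lam) (s : GB PhiC PhiF) :
    (buildT vm (transG N) s).2.next ≤ s.next + N.size := by
  induction N generalizing s with
  | var x => simp [transG, buildT, size]
  | lam y M _ => simp [transG, buildT, buildL_map_var, size]
  | app M N ihM ihN =>
    have hM := ihM s
    have hN := ihN (buildT vm (transG M) s).2
    simp only [transG, buildT, buildL, size]
    omega

theorem mem_fv_of_mem_varsL_transG {y : ℕ} {N : Lam} (h : y ∈ (transG N).varsL) :
    y ∈ N.fv := by
  induction N with
  | var x => simpa [transG, varsL, fv] using h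
  | lam z M _ =>
    obtain ⟨_, ht, hy⟩ := List.mem_flatMap.mp (by simpa only [transG, varsL_con] using h)
    obtain ⟨z', hz', rfl⟩ := List.mem_map.mp ht
    obtain rfl : y = z' := by simpa [varsL] using hy
    exact (Finset.mem_sort _).mp hz'
  | app M N ihM ihN =>
    obtain ⟨t, ht, hy⟩ := List.mem_flatMap.mp (by simpa only [transG, varsL_fn] using h)
    simp only [List.mem_cons, List.not_mem_nil, or_false] at ht
    rcases ht with rfl | rfl
    · exact Finset.mem_union_left _ (ihM hy)
    · exact Finset.mem_union_right _ (ihN hy)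

theorem varsL_transG_eq_nil {N : Lam} (h : N.Closed) : (transG N).varsL = [] :=
  List.eq_nil_iff_forall_not_mem.mpr fun _ hy => by
    have h' : N.fv = ∅ := h
    simpa [h'] using mem_fv_of_mem_varsL_transG hy

theorem card_graphOfTerm_transG_le {M : Lam} (hM : M.Closed) :
    (graphOfTerm (transG M)).V.card ≤ M.size := by
  simp only [graphOfTerm, Finset.card_range]
  simpa [varsL_transG_eq_nil hM] using
    buildT_transG_next_le _ M ⟨0, fun _ => none, fun _ => []⟩

theorem forallLab_graphOfTerm_transG (M : Lam) :
    (graphOfTerm (transG M)).ForallLab (BodySizeLt M.size) :=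
  buildT_lab_forall _ (fun _ _ h => by cases h) (forallSym_transG M)

end Phi

section PhiRule

open Lam GTerm

def phiRule (x : ℕ) (N : Lam) : GRule PhiC PhiF :=
  ⟨(), [con (x, N) ((fvList (lam x N)).map var), var x], transG N⟩

theorem exists_eq_phiRule {r : GRule PhiC PhiF} (h : r ∈ PhiGRules) :
    ∃ x N, r = phiRule x N := h

variable (x : ℕ) (N : Lam)

def phiVarIdx (y : ℕ) : ℕ := (fvList (lam x N) ++ [x]).idxOf y

/-- In the rule graph of `λx.N`, nodes `0, …, k - 1` are the free variables of `λx.N`, `k` is `x`,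
`k + 1` is `c_{x,N}` and `k + 2` is `app`, where `k = phiArc (x, N)`; the tree of `⟨N⟩` follows. -/
def phiLhsState : GB PhiC PhiF :=
  ⟨phiArc (x, N) + 3,
   fun v => if v = phiArc (x, N) + 2 then some (.inr ()) else
            if v = phiArc (x, N) + 1 then some (.inl (x, N)) else none,
   fun v => if v = phiArc (x, N) + 2 then [phiArc (x, N) + 1, phiArc (x, N)] else
            if v = phiArc (x, N) + 1 then (fvList (lam x N)).map (phiVarIdx x N) else []⟩

def phiRuleState : ℕ × GB PhiC PhiF := buildT (phiVarIdx x N) (transG N) (phiLhsState x N)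

theorem not_mem_fvList_lam : x ∉ fvList (lam x N) := by
  simp [fvList, fv]

theorem phiVarIdx_self : phiVarIdx x N x = phiArc (x, N) := by
  simp [phiVarIdx, List.idxOf_append_of_notMem (not_mem_fvList_lam x N), phiArc]

theorem phiVarIdx_getElem {i : ℕ} (hi : i < phiArc (x, N)) :
    phiVarIdx x N (fvList (lam x N))[i] = i :=
  (List.idxOf_append_of_mem (List.getElem_mem _)).trans
    (List.Nodup.idxOf_getElem (Finset.sort_nodup _ _) i hi)

theorem dedup_varsL_phiLhs :
    (fn (phiRule x N).f (phiRule x N).args).varsL.dedup = fvList (lam x N) ++ [x] := by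
  have hvars : (fn (phiRule x N).f (phiRule x N).args).varsL = fvList (lam x N) ++ [x] := by
    simp [phiRule, varsL_fn, varsL_con, List.flatMap_map, varsL]
  rw [hvars, List.dedup_eq_self]
  exact List.nodup_append.mpr ⟨Finset.sort_nodup _ _, List.nodup_singleton x,
    fun a ha b hb hab => not_mem_fvList_lam x N (by simp_all)⟩

theorem ruleGraph_phiRule :
    ruleGraph (phiRule x N) =
      (⟨Finset.range (phiRuleState x N).2.next, (phiRuleState x N).2.lab,
        (phiRuleState x N).2.succ, phiArc (x, N) + 2⟩,
       phiArc (x, N) + 2, (phiRuleState x N).1) := by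
  have hlen : (fvList (lam x N) ++ [x]).length = phiArc (x, N) + 1 := by simp [phiArc]
  have hlhs : buildT (phiVarIdx x N) (fn (phiRule x N).f (phiRule x N).args)
      ⟨phiArc (x, N) + 1, fun _ => none, fun _ => []⟩ = (phiArc (x, N) + 2, phiLhsState x N) := by
    simp [phiRule, buildT, buildL, buildL_map_var, phiLhsState, phiVarIdx_self, phiArc]
    exact ⟨rfl, rfl⟩
  simp only [ruleGraph, dedup_varsL_phiLhs, hlen]
  rw [show (fun y => (fvList (lam x N) ++ [x]).idxOf y) = phiVarIdx x N from rfl, hlhs]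
  rfl

theorem lab_phiRuleGraph_con :
    (ruleGraph (phiRule x N)).1.lab (phiArc (x, N) + 1) = some (.inl (x, N)) := by
  rw [ruleGraph_phiRule]
  show (phiRuleState x N).2.lab _ = _
  rw [phiRuleState, (buildT_lab_succ_of_lt _ _ _ (v := phiArc (x, N) + 1)
    (by simp [phiLhsState])).1]
  simp [phiLhsState]

theorem forallLab_phiRuleGraph :
    (ruleGraph (phiRule x N)).1.ForallLab (BodySizeLt (N.size + 1)) := by
  rw [ruleGraph_phiRule]
  refine buildT_lab_forall _ ?_ ((forallSym_transG N).mono (bodySizeLt_mono N.size.le_succ))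
  intro v a
  simp only [phiLhsState]
  split_ifs
  · rintro ⟨rfl⟩; trivial
  · rintro ⟨rfl⟩; exact N.size.lt_succ_self
  · rintro ⟨⟩

theorem reach_phiRuleGraph {v : ℕ} (hv : v < phiArc (x, N) + 3) :
    (ruleGraph (phiRule x N)).1.Reach (phiArc (x, N) + 2) v := by
  set k := phiArc (x, N)
  have hsucc : ∀ u < k + 3, (ruleGraph (phiRule x N)).1.succ u = (phiLhsState x N).succ u := by
    intro u hu
    rw [ruleGraph_phiRule]
    exact (buildT_lab_succ_of_lt _ _ _ hu).2
  have hmem : ∀ u < k + 3, u ∈ (ruleGraph (phiRule x N)).1.V := by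
    intro u hu
    rw [ruleGraph_phiRule, Finset.mem_range]
    exact lt_of_lt_of_le hu (next_le_buildT_next _ _ (phiLhsState x N))
  have hedge : ∀ u w, u < k + 3 → w ∈ (phiLhsState x N).succ u →
      (ruleGraph (phiRule x N)).1.edge u w :=
    fun u w hu hw => ⟨hmem u hu, hsucc u hu ▸ hw⟩
  have hk₂k₁ : (ruleGraph (phiRule x N)).1.edge (k + 2) (k + 1) :=
    hedge _ _ (by omega) (by simp [phiLhsState, k])
  rcases Nat.lt_or_ge v k with hvk | hvk
  · refine .tail (.single hk₂k₁) (hedge _ _ (by omega) ?_)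
    simp only [phiLhsState, k, show phiArc (x, N) + 1 ≠ phiArc (x, N) + 2 by omega, if_false,
      if_true]
    exact List.mem_map.mpr ⟨_, List.getElem_mem hvk, phiVarIdx_getElem x N hvk⟩
  · obtain rfl | rfl | rfl : v = k ∨ v = k + 1 ∨ v = k + 2 := by omega
    · exact .single (hedge _ _ (by omega) (by simp [phiLhsState, k]))
    · exact .single hk₂k₁
    · exact .refl

theorem card_filter_not_reach_phiRuleGraph_le :
    ((ruleGraph (phiRule x N)).1.V.filter
      fun v => ¬ (ruleGraph (phiRule x N)).1.Reach (phiArc (x, N) + 2) v).card ≤ N.size := by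
  have hsub : ((ruleGraph (phiRule x N)).1.V.filter
      fun v => ¬ (ruleGraph (phiRule x N)).1.Reach (phiArc (x, N) + 2) v) ⊆
      Finset.Ico (phiArc (x, N) + 3) (phiRuleState x N).2.next := by
    intro v hv
    rw [Finset.mem_filter] at hv
    have hvV := hv.1
    rw [ruleGraph_phiRule, Finset.mem_range] at hvV
    exact Finset.mem_Ico.mpr ⟨not_lt.mp fun hlt => hv.2 (reach_phiRuleGraph x N hlt), hvV⟩
  have hnext := buildT_transG_next_le (phiVarIdx x N) N (phiLhsState x N)
  calc _ ≤ (Finset.Ico (phiArc (x, N) + 3) (phiRuleState x N).2.next).card :=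
        Finset.card_le_card hsub
    _ ≤ N.size := by rw [Nat.card_Ico]; simp only [phiRuleState, phiLhsState] at hnext ⊢; omega

end PhiRule

theorem GStep.forallLab_bodySizeLt_and_card_le {B : ℕ} {G G' : TermGraph PhiC PhiF}
    (hG : G.ForallLab (BodySizeLt B)) (h : GStep PhiGRules G G') :
    G'.ForallLab (BodySizeLt B) ∧ G'.V.card ≤ G.V.card + B := by
  cases h with | @mk r φ hr hred =>
  obtain ⟨x, N, rfl⟩ := exists_eq_phiRule hr
  have hl : (ruleGraph (phiRule x N)).2.1 = phiArc (x, N) + 2 := by rw [ruleGraph_phiRule]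
  -- the node `c_{x,N}` of the left-hand side is matched in `G`
  have hN : N.size < B := by
    have hreach := reach_phiRuleGraph x N (v := phiArc (x, N) + 1) (by omega)
    rw [← hl] at hreach
    exact hG _ _ ((hred.1 _ hreach).2 _ (lab_phiRuleGraph_con x N)).1
  refine ⟨hG.fire fun v a ha => bodySizeLt_mono hN _ (forallLab_phiRuleGraph x N v a ha), ?_⟩
  have hcopies := card_filter_not_reach_phiRuleGraph_le x N
  rw [← hl] at hcopies
  have := TermGraph.card_fire_V_le G (ruleGraph (phiRule x N)).1 (ruleGraph (phiRule x N)).2.1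
    (ruleGraph (phiRule x N)).2.2 φ
  omega

/-- For every closed λ-term M, if the tree term graph 𝔾(⟨M⟩) rewrites in n steps of
the graph rewrite system corresponding to Φ to a term graph G, then G has at most
(n+1)·|M| vertices. -/
theorem graph_size_bound (M : Lam) (n : ℕ) (G : TermGraph PhiC PhiF)
    (hM : Lam.Closed M)
    (h : NSteps (GStep PhiGRules) n (graphOfTerm (transG M)) G) :
    G.V.card ≤ (n + 1) * Lam.size M := by
  have hsteps := NSteps.invariant_and_le_add_mul (r := GStep PhiGRules)
    (P := TermGraph.ForallLab (BodySizeLt M.size)) (f := fun G => G.V.card)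
    (fun _ _ => GStep.forallLab_bodySizeLt_and_card_le)
    (forallLab_graphOfTerm_transG M) h
  have hbase := card_graphOfTerm_transG_le hM
  rw [add_mul, one_mul]
  omega
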